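/- If ν is a random variable with P[ν = n] = e^{−t}(1 − e^{−t})^{n−1} for n = 1, 2, …, and conditionally on ν = n and on a tree/angle structure the coefficients (π_{1,n}, …, π_{n,n}) satisfy the recursive cosine/sine construction with i.i.d. angles φ_k distributed according to a probability measure β on [0, π], then for every s > 0, E_t[Σ_{j=1}^ν |π_{j,ν}|^s] = exp(−(1 − 2 l_s) t), where l_s := ∫_0^π (sin φ)^s β(dφ). -/

import Mathlib

open MeasureTheory Real

/-- McKean binary trees. -/
inductive MTree where
  | leaf : MTree
  | node (l r : MTree) : MTree

/-- Number of leaves of a McKean tree. -/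
def MTree.leaves : MTree → ℕ
  | .leaf => 1
  | .node l r => l.leaves + r.leaves

/-- The weight `p_n(t_n)` of a McKean tree (the marginal law of the germination
Markov chain). -/
noncomputable def MTree.weight : MTree → ℝ
  | .leaf => 1
  | .node l r => (1 / ((MTree.node l r).leaves - 1 : ℝ)) * l.weight * r.weight

/-- The recursive coefficients `π*_{j,n}(t_n, φ)` (with `j` and the angles
`0`-indexed). -/
noncomputable def MTree.piStar : MTree → (ℕ → ℝ) → ℕ → ℝ
  | .leaf, _, _ => 1
  | .node l r, φ, j =>
      if j < l.leaves then
        l.piStar φ j * Real.cos (φ ((MTree.node l r).leaves - 2))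
      else
        r.piStar (fun i => φ (i + (l.leaves - 1))) (j - l.leaves) *
          Real.sin (φ ((MTree.node l r).leaves - 2))

/-!
Conditionally on the tree, the angles below a node are independent of the node's own angle, so
the conditional mean of `∑ⱼ |π*ⱼ|^s` obeys `D(node a b) = l (D a + D b)`, i.e. it is
`∑ l ^ depth` over the leaves. Averaging over the germination chain, whose root split is uniform,
the means `T m` over trees with `m + 1` leaves satisfy `(m + 1) T (m + 1) = 2 l ∑_{k ≤ m} T k`,
which identifies `T m` with the coefficient of `x ^ m` in `(1 - x) ^ (-2 l)`. Summing against the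
geometric law of `ν` at `x = 1 - e^{-t}` gives `e^{-t} (e^{-t}) ^ (-2 l)`.
-/

theorem succ_mul_multichoose_succ {K : Type*} [Field K] [CharZero K] (a : K) (m : ℕ) :
    (m + 1) * Ring.multichoose a (m + 1) = (a + m) * Ring.multichoose a m := by
  have h := Ring.factorial_nsmul_multichoose_eq_ascPochhammer a
  have hm := h m
  have hm1 := h (m + 1)
  rw [Polynomial.ascPochhammer_smeval_eq_eval, nsmul_eq_mul] at hm hm1
  rw [ascPochhammer_succ_eval, ← hm, Nat.factorial_succ, Nat.cast_mul] at hm1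
  have : (m.factorial : K) ≠ 0 := Nat.cast_ne_zero.2 m.factorial_ne_zero
  apply mul_left_cancel₀ this
  push_cast at hm1
  linear_combination hm1

theorem eq_multichoose_of_succ_mul_eq_sum {K : Type*} [Field K] [CharZero K] {a : K} {u : ℕ → K}
    (h0 : u 0 = 1) (h : ∀ m, (m + 1) * u (m + 1) = a * ∑ k ∈ Finset.range (m + 1), u k) (m : ℕ) :
    u m = Ring.multichoose a m := by
  have step (m : ℕ) : (m + 1) * u (m + 1) = (a + m) * u m := by
    cases m with
    | zero => simpa using h 0
    | succ m =>
      rw [h, Finset.sum_range_succ, mul_add, ← h]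
      push_cast
      ring
  induction m with
  | zero => simp [h0]
  | succ m ih =>
    apply mul_left_cancel₀ (Nat.cast_add_one_ne_zero m)
    rw [step, succ_mul_multichoose_succ, ih]

theorem hasSum_multichoose_mul_pow (a : ℝ) {x : ℝ} (hx : |x| < 1) :
    HasSum (fun n => Ring.multichoose a n * x ^ n) (1 / (1 - x) ^ a) := by
  have := (Real.one_div_one_sub_rpow_hasFPowerSeriesOnBall_zero a).hasSum
    (y := x) (by simpa [enorm_eq_nnnorm, ← NNReal.coe_lt_coe] using hx)
  simpa [FormalMultilinearSeries.ofScalars_apply_eq, Ring.multichoose_eq, mul_comm] using this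

section
variable {α : Type*} [MeasurableSpace α] (μ : Measure α) [SigmaFinite μ]

theorem measurePreserving_finAppend (p q : ℕ) :
    MeasurePreserving (fun z : (Fin p → α) × (Fin q → α) => Fin.append z.1 z.2)
      ((Measure.pi fun _ => μ).prod (Measure.pi fun _ => μ)) (Measure.pi fun _ => μ) := by
  convert (measurePreserving_piCongrLeft (fun _ : Fin (p + q) => μ) finSumFinEquiv).comp
    (measurePreserving_sumPiEquivProdPi_symm (fun _ : Fin p ⊕ Fin q => μ)) using 1
  ext ⟨u, v⟩ i
  simp only [MeasurableEquiv.piCongrLeft, Function.comp_apply, MeasurableEquiv.coe_mk]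
  refine Fin.addCases (fun i => ?_) (fun i => ?_) i
  · rw [Fin.append_left, ← finSumFinEquiv_apply_left, Equiv.piCongrLeft_apply_apply]; rfl
  · rw [Fin.append_right, ← finSumFinEquiv_apply_right, Equiv.piCongrLeft_apply_apply]; rfl

theorem measurePreserving_finSnoc (m : ℕ) :
    MeasurePreserving (fun z : α × (Fin m → α) => (Fin.snoc z.2 z.1 : Fin (m + 1) → α))
      (μ.prod (Measure.pi fun _ => μ)) (Measure.pi fun _ => μ) := by
  convert (measurePreserving_piFinSuccAbove (fun _ : Fin (m + 1) => μ) (Fin.last m)).symm using 1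
  ext ⟨x, w⟩ i
  simp

end

theorem integrable_abs_rpow_of_abs_le_one {α : Type*} [MeasurableSpace α] {μ : Measure α}
    [IsFiniteMeasure μ] {f : α → ℝ} (hf : Measurable f) (hf1 : ∀ x, |f x| ≤ 1) {s : ℝ} (hs : 0 ≤ s) :
    Integrable (fun x => |f x| ^ s) μ :=
  .of_bound (hf.abs.pow_const s).aestronglyMeasurable 1 (.of_forall fun x => by
    rw [Real.norm_eq_abs, abs_of_nonneg (by positivity)]
    exact Real.rpow_le_one (abs_nonneg _) (hf1 x) hs)

def extendByZero {n : ℕ} (φ : Fin n → ℝ) : ℕ → ℝ := fun i => if h : i < n then φ ⟨i, h⟩ else 0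

theorem measurable_extendByZero (n : ℕ) : Measurable (extendByZero (n := n)) := by
  refine measurable_pi_lambda _ fun i => ?_
  by_cases h : i < n <;> simp [extendByZero, h, measurable_pi_apply]

theorem extendByZero_snoc_append_of_lt {p q : ℕ} (x : ℝ) (u : Fin p → ℝ) (v : Fin q → ℝ)
    {i : ℕ} (hi : i < p) :
    extendByZero (Fin.snoc (Fin.append u v) x : Fin (p + q + 1) → ℝ) i = extendByZero u i := by
  have h1 : (⟨i, by omega⟩ : Fin (p + q + 1)) = Fin.castSucc (Fin.castAdd q ⟨i, hi⟩) := rfl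
  rw [extendByZero, dif_pos (by omega), h1, Fin.snoc_castSucc, Fin.append_left, extendByZero,
    dif_pos hi]

theorem extendByZero_snoc_append_add {p q : ℕ} (x : ℝ) (u : Fin p → ℝ) (v : Fin q → ℝ)
    {i : ℕ} (hi : i < q) :
    extendByZero (Fin.snoc (Fin.append u v) x : Fin (p + q + 1) → ℝ) (i + p) =
      extendByZero v i := by
  have h1 : (⟨i + p, by omega⟩ : Fin (p + q + 1)) = Fin.castSucc (Fin.natAdd p ⟨i, hi⟩) := by
    ext; simp [add_comm]
  rw [extendByZero, dif_pos (by omega), h1, Fin.snoc_castSucc, Fin.append_right, extendByZero,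
    dif_pos hi]

theorem extendByZero_snoc_last {m : ℕ} (x : ℝ) (w : Fin m → ℝ) :
    extendByZero (Fin.snoc w x : Fin (m + 1) → ℝ) m = x := by
  rw [extendByZero, dif_pos m.lt_succ_self]
  exact Fin.snoc_last (α := fun _ => ℝ) x w

namespace MTree

theorem one_le_leaves : ∀ tr : MTree, 1 ≤ tr.leaves
  | .leaf => le_rfl
  | .node a _ => le_add_right a.one_le_leaves

theorem eq_leaf_of_leaves_eq_one {tr : MTree} (h : tr.leaves = 1) : tr = .leaf := by
  cases tr with
  | leaf => rfl
  | node a b => have := a.one_le_leaves; have := b.one_le_leaves; simp only [leaves] at h; omega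

def nodeEquiv (m : ℕ) :
    {tr : MTree // tr.leaves = m + 2} ≃
      Σ k : Fin (m + 1), {a : MTree // a.leaves = k + 1} × {b : MTree // b.leaves = m - k + 1} where
  toFun
    | ⟨.leaf, h⟩ => absurd h (by simp [leaves])
    | ⟨.node a b, h⟩ =>
        have := a.one_le_leaves
        have := b.one_le_leaves
        have : a.leaves + b.leaves = m + 2 := h
        ⟨⟨a.leaves - 1, by omega⟩, ⟨a, by dsimp only; omega⟩, ⟨b, by dsimp only; omega⟩⟩
  invFun := fun ⟨k, ⟨a, ha⟩, ⟨b, hb⟩⟩ => ⟨.node a b, by simp only [leaves, ha, hb]; omega⟩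
  left_inv
    | ⟨.leaf, h⟩ => absurd h (by simp [leaves])
    | ⟨.node _ _, _⟩ => rfl
  right_inv := by
    rintro ⟨⟨k, hk⟩, ⟨a, ha⟩, ⟨b, hb⟩⟩
    obtain rfl : k = a.leaves - 1 := by simp only at ha; omega
    rfl

instance : Subsingleton {tr : MTree // tr.leaves = 1} :=
  ⟨fun ⟨a, ha⟩ ⟨b, hb⟩ => by simp [eq_leaf_of_leaves_eq_one ha, eq_leaf_of_leaves_eq_one hb]⟩

instance finite_leaves_eq (n : ℕ) : Finite {tr : MTree // tr.leaves = n + 1} := by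
  induction n using Nat.strong_induction_on with
  | _ n ih =>
    match n with
    | 0 => exact Finite.of_subsingleton
    | m + 1 =>
      have := fun k : Fin (m + 1) => ih k (by omega)
      have := fun k : Fin (m + 1) => ih (m - k) (by omega)
      exact .of_equiv _ (nodeEquiv m).symm

noncomputable instance (n : ℕ) : Fintype {tr : MTree // tr.leaves = n + 1} := .ofFinite _

/-- The mean of `f` over the trees with `n + 1` leaves, drawn with probability `p_{n+1}`. -/
noncomputable def weightedSum (n : ℕ) (f : MTree → ℝ) : ℝ :=
  ∑ tr : {tr : MTree // tr.leaves = n + 1}, tr.1.weight * f tr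

theorem weightedSum_zero (f : MTree → ℝ) : weightedSum 0 f = f .leaf := by
  rw [weightedSum, Fintype.sum_subsingleton _ ⟨.leaf, rfl⟩]
  simp [weight]

theorem weight_node {a b : MTree} {m : ℕ} (h : a.leaves + b.leaves = m + 2) :
    (node a b).weight = a.weight * b.weight / (m + 1) := by
  have : ((node a b).leaves : ℝ) = m + 2 := by simp only [leaves]; exact_mod_cast h
  rw [weight, this]
  ring

theorem succ_mul_weightedSum_succ (m : ℕ) (f : MTree → ℝ) :
    (m + 1) * weightedSum (m + 1) f =
      ∑ k ∈ Finset.range (m + 1), ∑ a : {a : MTree // a.leaves = k + 1},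
        ∑ b : {b : MTree // b.leaves = m - k + 1}, a.1.weight * b.1.weight * f (node a b) := by
  rw [weightedSum, ← (nodeEquiv m).symm.sum_comp, Fintype.sum_sigma, Finset.mul_sum,
    ← Fin.sum_univ_eq_sum_range]
  refine Finset.sum_congr rfl fun k _ => ?_
  rw [Fintype.sum_prod_type, Finset.mul_sum]
  refine Finset.sum_congr rfl fun ⟨a, ha⟩ _ => ?_
  rw [Finset.mul_sum]
  refine Finset.sum_congr rfl fun ⟨b, hb⟩ _ => ?_
  have hab : a.leaves + b.leaves = m + 2 := by have := k.isLt; omega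
  change _ * ((node a b).weight * f (node a b)) = _
  rw [weight_node hab]
  field_simp

theorem weightedSum_one (n : ℕ) : weightedSum n (fun _ => 1) = 1 := by
  induction n using Nat.strong_induction_on with
  | _ n ih =>
    match n with
    | 0 => exact weightedSum_zero _
    | m + 1 =>
      have h := succ_mul_weightedSum_succ m fun _ => 1
      have hk : ∀ k ∈ Finset.range (m + 1), ∑ a : {a : MTree // a.leaves = k + 1},
          ∑ b : {b : MTree // b.leaves = m - k + 1}, a.1.weight * b.1.weight * 1 = 1 := by
        intro k hk
        have hk := Finset.mem_range.1 hk
        simpa [weightedSum, ← Finset.sum_mul_sum] using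
          congrArg₂ (· * ·) (ih k (by omega)) (ih (m - k) (by omega))
      rw [Finset.sum_congr rfl hk, Finset.sum_const, Finset.card_range, nsmul_one,
        Nat.cast_succ] at h
      exact (mul_eq_left₀ (Nat.cast_add_one_ne_zero m)).1 h

/-- `∑ c ^ depth v` over the leaves `v` of the tree. -/
noncomputable def sumPowDepth (c : ℝ) : MTree → ℝ
  | .leaf => 1
  | .node a b => c * (a.sumPowDepth c + b.sumPowDepth c)

theorem succ_mul_weightedSum_sumPowDepth_succ (c : ℝ) (m : ℕ) :
    (m + 1) * weightedSum (m + 1) (sumPowDepth c) =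
      2 * c * ∑ k ∈ Finset.range (m + 1), weightedSum k (sumPowDepth c) := by
  have node_sum (k : ℕ) : ∑ a : {a : MTree // a.leaves = k + 1},
      ∑ b : {b : MTree // b.leaves = m - k + 1}, a.1.weight * b.1.weight * sumPowDepth c (node a b)
        = c * (weightedSum k (sumPowDepth c) * weightedSum (m - k) (fun _ => 1) +
            weightedSum k (fun _ => 1) * weightedSum (m - k) (sumPowDepth c)) := by
    simp only [weightedSum]
    rw [Finset.sum_mul_sum, Finset.sum_mul_sum, ← Finset.sum_add_distrib, Finset.mul_sum]
    refine Finset.sum_congr rfl fun a _ => ?_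
    rw [← Finset.sum_add_distrib, Finset.mul_sum]
    refine Finset.sum_congr rfl fun b _ => ?_
    rw [sumPowDepth]
    ring
  have reflect : ∑ k ∈ Finset.range (m + 1), weightedSum (m - k) (sumPowDepth c) =
      ∑ k ∈ Finset.range (m + 1), weightedSum k (sumPowDepth c) := by
    simpa using Finset.sum_range_reflect (fun k => weightedSum k (sumPowDepth c)) (m + 1)
  simp only [succ_mul_weightedSum_succ, node_sum, weightedSum_one, mul_one, one_mul,
    ← Finset.mul_sum, Finset.sum_add_distrib, reflect]
  ring

theorem piStar_node (a b : MTree) (φ : ℕ → ℝ) (j : ℕ) :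
    (node a b).piStar φ j =
      if j < a.leaves then a.piStar φ j * Real.cos (φ (a.leaves + b.leaves - 2))
      else b.piStar (fun i => φ (i + (a.leaves - 1))) (j - a.leaves) *
        Real.sin (φ (a.leaves + b.leaves - 2)) := rfl

theorem piStar_congr {tr : MTree} {φ ψ : ℕ → ℝ} (h : ∀ i < tr.leaves - 1, φ i = ψ i) :
    tr.piStar φ = tr.piStar ψ := by
  induction tr generalizing φ ψ with
  | leaf => rfl
  | node a b iha ihb =>
    have := a.one_le_leaves
    have := b.one_le_leaves
    simp only [leaves] at h
    ext j
    rw [piStar_node, piStar_node, h _ (by omega),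
      iha fun i hi => h i (by omega), ihb fun i hi => h _ (by omega)]

theorem abs_piStar_le_one (tr : MTree) (φ : ℕ → ℝ) (j : ℕ) : |tr.piStar φ j| ≤ 1 := by
  induction tr generalizing φ j with
  | leaf => simp [piStar]
  | node a b iha ihb =>
    rw [piStar_node]
    split_ifs
    · simpa [abs_mul] using mul_le_one₀ (iha φ j) (abs_nonneg _) (abs_cos_le_one _)
    · simpa [abs_mul] using mul_le_one₀ (ihb _ _) (abs_nonneg _) (abs_sin_le_one _)

theorem measurable_piStar (tr : MTree) (j : ℕ) : Measurable fun φ : ℕ → ℝ => tr.piStar φ j := by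
  induction tr generalizing j with
  | leaf => exact measurable_const
  | node a b iha ihb =>
    simp only [piStar_node]
    split_ifs
    · exact (iha j).mul (measurable_pi_apply _).cos
    · exact ((ihb _).comp (measurable_pi_lambda _ fun i => measurable_pi_apply _)).mul
        (measurable_pi_apply _).sin

noncomputable def powerSum (s : ℝ) (tr : MTree) (φ : ℕ → ℝ) : ℝ :=
  ∑ j ∈ Finset.range tr.leaves, |tr.piStar φ j| ^ s

theorem powerSum_node (s : ℝ) (a b : MTree) (φ : ℕ → ℝ) :
    (node a b).powerSum s φ =
      |Real.cos (φ (a.leaves + b.leaves - 2))| ^ s * a.powerSum s φ +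
        |Real.sin (φ (a.leaves + b.leaves - 2))| ^ s *
          b.powerSum s (fun i => φ (i + (a.leaves - 1))) := by
  rw [powerSum, leaves, Finset.sum_range_add, powerSum, powerSum, Finset.mul_sum, Finset.mul_sum]
  congr 1 <;> refine Finset.sum_congr rfl fun j hj => ?_
  · rw [piStar_node, if_pos (Finset.mem_range.1 hj), abs_mul,
      Real.mul_rpow (abs_nonneg _) (abs_nonneg _), mul_comm]
  · rw [piStar_node, if_neg (by omega), Nat.add_sub_cancel_left, abs_mul,
      Real.mul_rpow (abs_nonneg _) (abs_nonneg _), mul_comm]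

theorem powerSum_congr {s : ℝ} {tr : MTree} {φ ψ : ℕ → ℝ} (h : ∀ i < tr.leaves - 1, φ i = ψ i) :
    tr.powerSum s φ = tr.powerSum s ψ := by
  rw [powerSum, powerSum, piStar_congr h]

theorem abs_powerSum_le {s : ℝ} (hs : 0 ≤ s) (tr : MTree) (φ : ℕ → ℝ) :
    |tr.powerSum s φ| ≤ tr.leaves := by
  rw [abs_of_nonneg (Finset.sum_nonneg fun j _ => by positivity)]
  simpa [powerSum] using Finset.sum_le_card_nsmul (Finset.range tr.leaves) _ 1 fun j _ =>
    Real.rpow_le_one (abs_nonneg _) (tr.abs_piStar_le_one φ j) hs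

theorem measurable_powerSum (s : ℝ) (tr : MTree) : Measurable (tr.powerSum s) :=
  Finset.measurable_sum _ fun j _ => (tr.measurable_piStar j).abs.pow_const s

theorem integrable_powerSum_extendByZero {s : ℝ} (hs : 0 ≤ s) (tr : MTree) {n : ℕ}
    (μ : Measure (Fin n → ℝ)) [IsFiniteMeasure μ] :
    Integrable (fun φ => tr.powerSum s (extendByZero φ)) μ :=
  .of_bound ((tr.measurable_powerSum s).comp (measurable_extendByZero n)).aestronglyMeasurable
    tr.leaves (.of_forall fun _ => tr.abs_powerSum_le hs _)

theorem powerSum_extendByZero_snoc_append (s : ℝ) {a b : MTree} {p q : ℕ} (ha : a.leaves = p + 1)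
    (hb : b.leaves = q + 1) (x : ℝ) (u : Fin p → ℝ) (v : Fin q → ℝ) :
    (node a b).powerSum s (extendByZero (Fin.snoc (Fin.append u v) x : Fin (p + q + 1) → ℝ)) =
      |Real.cos x| ^ s * a.powerSum s (extendByZero u) +
        |Real.sin x| ^ s * b.powerSum s (extendByZero v) := by
  rw [powerSum_node, show a.leaves + b.leaves - 2 = p + q by omega, extendByZero_snoc_last,
    powerSum_congr (tr := a) (ψ := extendByZero u) fun i hi => ?left,
    powerSum_congr (tr := b) (ψ := extendByZero v) fun i hi => ?right]
  case left => exact extendByZero_snoc_append_of_lt x u v (by omega)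
  case right =>
    rw [show a.leaves - 1 = p by omega]
    exact extendByZero_snoc_append_add x u v (by omega)

theorem integral_powerSum_extendByZero {β : Measure ℝ} [IsProbabilityMeasure β] {s c : ℝ}
    (hs : 0 ≤ s) (hcos : ∫ x, |Real.cos x| ^ s ∂β = c) (hsin : ∫ x, |Real.sin x| ^ s ∂β = c)
    (tr : MTree) {n : ℕ} (hn : tr.leaves = n + 1) :
    ∫ φ : Fin n → ℝ, tr.powerSum s (extendByZero φ) ∂(Measure.pi fun _ => β) =
      tr.sumPowDepth c := by
  induction tr generalizing n with
  | leaf => simp [powerSum, piStar, sumPowDepth, leaves]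
  | node a b iha ihb =>
    obtain ⟨p, ha⟩ : ∃ p, a.leaves = p + 1 := ⟨a.leaves - 1, by have := a.one_le_leaves; omega⟩
    obtain ⟨q, hb⟩ : ∃ q, b.leaves = q + 1 := ⟨b.leaves - 1, by have := b.one_le_leaves; omega⟩
    obtain rfl : n = p + q + 1 := by simp only [leaves] at hn; omega
    -- the left subtree reads the first `p` angles, the right one the next `q`, the root the last
    have he : MeasurePreserving
        (fun z : ℝ × (Fin p → ℝ) × (Fin q → ℝ) => Fin.snoc (Fin.append z.2.1 z.2.2) z.1)
        (β.prod ((Measure.pi fun _ => β).prod (Measure.pi fun _ => β))) (Measure.pi fun _ => β) :=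
      (measurePreserving_finSnoc β (p + q)).comp
        ((MeasurePreserving.id β).prod (measurePreserving_finAppend β p q))
    have hm : Measurable fun φ : Fin (p + q + 1) → ℝ => (node a b).powerSum s (extendByZero φ) :=
      (measurable_powerSum s _).comp (measurable_extendByZero _)
    rw [← he.map_eq, integral_map he.measurable.aemeasurable hm.aestronglyMeasurable]
    simp only [powerSum_extendByZero_snoc_append s ha hb]
    rw [integral_add, integral_prod_mul (fun x => |Real.cos x| ^ s)
        (fun w : (Fin p → ℝ) × (Fin q → ℝ) => a.powerSum s (extendByZero w.1)),
      integral_prod_mul (fun x => |Real.sin x| ^ s)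
        (fun w : (Fin p → ℝ) × (Fin q → ℝ) => b.powerSum s (extendByZero w.2)),
      integral_fun_fst fun u => a.powerSum s (extendByZero u),
      integral_fun_snd fun v => b.powerSum s (extendByZero v), iha ha, ihb hb, hcos, hsin,
      sumPowDepth]
    · simp only [probReal_univ, one_smul]
      ring
    · exact (integrable_abs_rpow_of_abs_le_one Real.measurable_cos abs_cos_le_one hs).mul_prod
        ((integrable_powerSum_extendByZero hs a _).comp_fst _)
    · exact (integrable_abs_rpow_of_abs_le_one Real.measurable_sin abs_sin_le_one hs).mul_prod
        ((integrable_powerSum_extendByZero hs b _).comp_snd _)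

end MTree

/-- The `n`-th term accounts for `ν = n + 1`: a tree with `n + 1` leaves carrying `n` angles. -/
theorem expected_sum_pi_pow
    (t s : ℝ) (ht : 0 < t) (hs : 0 < s)
    (β : Measure ℝ) [IsProbabilityMeasure β]
    (hβsupp : β (Set.Icc 0 π) = 1)
    (l : ℝ)
    (hsin : ∫ φ, Real.sin φ ^ s ∂β = l)
    (hcos : ∫ φ, |Real.cos φ| ^ s ∂β = l) :
    ∑' n : ℕ, Real.exp (-t) * (1 - Real.exp (-t)) ^ n *
      ∑' tr : {tr : MTree // tr.leaves = n + 1},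
        (tr : MTree).weight *
          ∫ φ : Fin n → ℝ,
            (∑ j ∈ Finset.range (n + 1),
              |MTree.piStar tr (fun i => if h : i < n then φ ⟨i, h⟩ else 0) j| ^ s)
            ∂(Measure.pi fun _ : Fin n => β)
      = Real.exp (-(1 - 2 * l) * t) := by
  have habs_sin : ∫ φ, |Real.sin φ| ^ s ∂β = l := by
    rw [← hsin]
    refine integral_congr_ae ?_
    filter_upwards [(ae_mem_iff_measure_eq measurableSet_Icc.nullMeasurableSet).2
      (by rw [hβsupp, measure_univ])] with φ hφ
    rw [abs_of_nonneg (Real.sin_nonneg_of_nonneg_of_le_pi hφ.1 hφ.2)]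
  have hmean (n : ℕ) : ∑' tr : {tr : MTree // tr.leaves = n + 1}, (tr : MTree).weight *
      ∫ φ : Fin n → ℝ, (∑ j ∈ Finset.range (n + 1),
        |MTree.piStar tr (fun i => if h : i < n then φ ⟨i, h⟩ else 0) j| ^ s)
        ∂(Measure.pi fun _ : Fin n => β) = Ring.multichoose (2 * l) n := by
    rw [tsum_fintype, ← eq_multichoose_of_succ_mul_eq_sum
      (u := fun n => MTree.weightedSum n (MTree.sumPowDepth l))
      (by simp [MTree.weightedSum_zero, MTree.sumPowDepth])
      (MTree.succ_mul_weightedSum_sumPowDepth_succ l)]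
    refine Finset.sum_congr rfl fun ⟨tr, htr⟩ _ => ?_
    rw [← MTree.integral_powerSum_extendByZero hs.le hcos habs_sin tr htr]
    simp only [MTree.powerSum, htr]
    rfl
  have hx : |1 - Real.exp (-t)| < 1 := by
    have := Real.exp_pos (-t)
    have := Real.exp_lt_one_iff.2 (neg_lt_zero.2 ht)
    rw [abs_lt]; constructor <;> linarith
  simp_rw [hmean, mul_assoc, mul_comm ((1 - Real.exp (-t)) ^ _)]
  rw [((hasSum_multichoose_mul_pow (2 * l) hx).mul_left _).tsum_eq, sub_sub_cancel,
    ← Real.exp_mul, one_div, ← Real.exp_neg, ← Real.exp_add]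
  ring_nf
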